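/- arXiv:1904.11681 — 2 statements merged into one kernel-verified Lean document; each statement's English description precedes it below -/
import Mathlib

section
/- Let W ⊆ E be a nonempty closed convex set with diameter at most D, and let f_1, …, f_T : E → ℝ be convex differentiable functions. Run SOGD with parameters δ > 0 and α = D/√2: w_1 ∈ W, η_t = α/√(δ + Σ_{i=1}^t ‖∇f_i(w_i)‖²), w_{t+1} = Π_W[w_t − η_t ∇f_t(w_t)]. Then for every w ∈ W: Σ_{t=1}^T f_t(w_t) − Σ_{t=1}^T f_t(w) ≤ √(2 D²) · √(δ + Σ_{t=1}^T ‖∇f_t(w_t)‖²). -/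
/-!
Convexity bounds the regret by the linearized regret `∑ ⟪g t, w t - x⟫` with `g t = ∇f t (w t)`.
Since the projection is nonexpansive towards points of `W`, each term is at most
`(‖w t - x‖² - ‖w (t+1) - x‖²) / (2η t) + η t ‖g t‖² / 2`. The stepsizes `η t = α / √(S t)`,
`S t = δ + ∑_{i ≤ t} ‖g i‖²`, are nonincreasing, so the first parts telescope to at most
`D² / (2η T)`, while `∑ ‖g t‖² / √(S t) ≤ 2√(S T)`. The total `(D² / (2α) + α) √(S T)` equals
`√(2D²) √(S T)` for `α = D / √2`.
-/

open Finset

lemma div_sqrt_add_le_two_mul_sub {a s : ℝ} (ha : 0 ≤ a) (hs : 0 ≤ s) :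
    a / √(s + a) ≤ 2 * (√(s + a) - √s) := by
  have hle : √s ≤ √(s + a) := Real.sqrt_le_sqrt (by linarith)
  rcases (Real.sqrt_nonneg (s + a)).eq_or_lt with h0 | hpos
  · rw [← h0, div_zero]; linarith
  rw [div_le_iff₀ hpos]
  nlinarith [Real.sq_sqrt hs, Real.sq_sqrt (add_nonneg hs ha), sq_nonneg (√(s + a) - √s)]

lemma sum_Icc_div_sqrt_partialSum_le {a : ℕ → ℝ} (ha : ∀ t, 0 ≤ a t) {c : ℝ} (hc : 0 ≤ c)
    (n : ℕ) :
    ∑ t ∈ Icc 1 n, a t / √(c + ∑ i ∈ Icc 1 t, a i)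
      ≤ 2 * (√(c + ∑ i ∈ Icc 1 n, a i) - √c) := by
  induction n with
  | zero => simp
  | succ n ih =>
    have hpartial : 0 ≤ c + ∑ i ∈ Icc 1 n, a i := add_nonneg hc (sum_nonneg fun i _ ↦ ha i)
    have hlast := div_sqrt_add_le_two_mul_sub (ha (n + 1)) hpartial
    rw [sum_Icc_succ_top (by omega), sum_Icc_succ_top (by omega), ← add_assoc]
    linarith

lemma sum_Icc_mul_sub_succ_le {a b : ℕ → ℝ} {B : ℝ} (hb : Monotone b) (hb0 : 0 ≤ b 0)
    (ha : ∀ t, 0 ≤ a t) (haB : ∀ t ≥ 1, a t ≤ B) (n : ℕ) :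
    ∑ t ∈ Icc 1 n, b t * (a t - a (t + 1)) ≤ b n * B := by
  suffices h : ∑ t ∈ Icc 1 n, b t * (a t - a (t + 1)) ≤ b n * (B - a (n + 1)) by
    nlinarith [ha (n + 1), hb (Nat.zero_le n)]
  induction n with
  | zero => simpa using mul_nonneg hb0 (sub_nonneg.2 (haB 1 le_rfl))
  | succ n ih =>
    rw [sum_Icc_succ_top (by omega)]
    nlinarith [hb n.le_succ, haB (n + 1) (by omega)]

lemma mem_of_succ_eq_proj {α : Type*} {W : Set α} {proj : α → α} (hproj : ∀ y, proj y ∈ W)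
    {w v : ℕ → α} (hw1 : w 1 ∈ W) (hwrec : ∀ t ≥ 1, w (t + 1) = proj (v t)) : ∀ t ≥ 1, w t ∈ W :=
  Nat.le_induction hw1 fun t ht _ ↦ hwrec t ht ▸ hproj _

section InnerProductSpace

variable {E : Type*} [NormedAddCommGroup E] [InnerProductSpace ℝ E]

lemma ConvexOn.sub_le_inner_gradient [CompleteSpace E] {s : Set E} {f : E → ℝ}
    (hf : ConvexOn ℝ s f) {u v : E} (hu : u ∈ s) (hv : v ∈ s) (hd : DifferentiableAt ℝ f u) :
    f u - f v ≤ inner ℝ (gradient f u) (u - v) := by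
  let L : ℝ →ᵃ[ℝ] E := AffineMap.lineMap u v
  have hderiv : HasDerivAt (f ∘ L) (inner ℝ (gradient f u) (v - u)) 0 := by
    have hf' := hd.hasGradientAt.hasFDerivAt
    rw [← AffineMap.lineMap_apply_zero u v (k := ℝ)] at hf'
    simpa using hf'.comp_hasDerivAt (0 : ℝ) AffineMap.hasDerivAt_lineMap
  have hslope := (hf.comp_affineMap L).le_slope_of_hasDerivAt
    (by simpa [L] using hu) (by simpa [L] using hv) zero_lt_one hderiv
  have hsec : slope (f ∘ L) 0 1 = f v - f u := by simp [slope_def_field, L]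
  rw [hsec] at hslope
  rw [← neg_sub v u, inner_neg_right]
  linarith

lemma norm_sub_le_of_forall_norm_sub_le {W : Set E} (hW : Convex ℝ W) {u p x : E}
    (hp : p ∈ W) (hmin : ∀ y ∈ W, ‖u - p‖ ≤ ‖u - y‖) (hx : x ∈ W) :
    ‖p - x‖ ≤ ‖u - x‖ := by
  have : Nonempty W := ⟨⟨p, hp⟩⟩
  have hinf : ‖u - p‖ = ⨅ y : W, ‖u - y‖ :=
    le_antisymm (le_ciInf fun y ↦ hmin y y.2)
      (ciInf_le ⟨0, Set.forall_mem_range.2 fun _ ↦ norm_nonneg _⟩ (⟨p, hp⟩ : W))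
  have hvi : inner ℝ (u - p) (x - p) ≤ 0 :=
    (norm_eq_iInf_iff_real_inner_le_zero hW hp).mp hinf x hx
  have hexpand : ‖u - x‖ ^ 2 = ‖u - p‖ ^ 2 - 2 * inner ℝ (u - p) (x - p) + ‖x - p‖ ^ 2 := by
    rw [← norm_sub_sq_real, sub_sub_sub_cancel_right]
  have hsq : ‖p - x‖ ^ 2 ≤ ‖u - x‖ ^ 2 := by
    rw [norm_sub_rev]; nlinarith [sq_nonneg ‖u - p‖]
  exact (pow_le_pow_iff_left₀ (norm_nonneg _) (norm_nonneg _) two_ne_zero).mp hsq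

lemma inner_le_of_norm_sub_le_norm_step_sub {w w' g x : E} {η : ℝ} (hη : 0 < η)
    (hstep : ‖w' - x‖ ≤ ‖w - η • g - x‖) :
    inner ℝ g (w - x) ≤ (2 * η)⁻¹ * (‖w - x‖ ^ 2 - ‖w' - x‖ ^ 2) + η / 2 * ‖g‖ ^ 2 := by
  have hexpand : ‖w - η • g - x‖ ^ 2
      = ‖w - x‖ ^ 2 - 2 * η * inner ℝ g (w - x) + η ^ 2 * ‖g‖ ^ 2 := by
    rw [sub_right_comm, norm_sub_sq_real, real_inner_smul_right, real_inner_comm, norm_smul,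
      Real.norm_of_nonneg hη.le]
    ring
  have hsq := pow_le_pow_left₀ (norm_nonneg _) hstep 2
  rw [hexpand] at hsq
  rw [← sub_nonneg]
  have hfactor : (2 * η)⁻¹ * (‖w - x‖ ^ 2 - ‖w' - x‖ ^ 2) + η / 2 * ‖g‖ ^ 2 - inner ℝ g (w - x)
      = (2 * η)⁻¹ * (‖w - x‖ ^ 2 - 2 * η * inner ℝ g (w - x) + η ^ 2 * ‖g‖ ^ 2
          - ‖w' - x‖ ^ 2) := by
    field_simp; ring
  rw [hfactor]
  exact mul_nonneg (by positivity) (by linarith)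

theorem sum_inner_le_of_projected_gradient_descent {W : Set E} (hW : Convex ℝ W) (proj : E → E)
    (hproj : ∀ x : E, proj x ∈ W ∧ ∀ y ∈ W, ‖x - proj x‖ ≤ ‖x - y‖)
    {D : ℝ} (hdiam : ∀ x ∈ W, ∀ y ∈ W, ‖x - y‖ ≤ D)
    {η : ℕ → ℝ} (hη : ∀ t, 0 < η t) (hanti : Antitone η)
    {g w : ℕ → E} (hw1 : w 1 ∈ W) (hwrec : ∀ t ≥ 1, w (t + 1) = proj (w t - η t • g t))
    {x : E} (hx : x ∈ W) (T : ℕ) :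
    ∑ t ∈ Icc 1 T, inner ℝ (g t) (w t - x)
      ≤ (2 * η T)⁻¹ * D ^ 2 + ∑ t ∈ Icc 1 T, η t / 2 * ‖g t‖ ^ 2 := by
  have hmem := mem_of_succ_eq_proj (fun y ↦ (hproj y).1) hw1 hwrec
  have hstep (t : ℕ) (ht : t ∈ Icc 1 T) : inner ℝ (g t) (w t - x)
      ≤ (2 * η t)⁻¹ * (‖w t - x‖ ^ 2 - ‖w (t + 1) - x‖ ^ 2) + η t / 2 * ‖g t‖ ^ 2 := by
    have ht1 := (mem_Icc.mp ht).1
    refine inner_le_of_norm_sub_le_norm_step_sub (hη t) ?_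
    rw [hwrec t ht1]
    exact norm_sub_le_of_forall_norm_sub_le hW (hproj _).1 (hproj _).2 hx
  have htelescope := sum_Icc_mul_sub_succ_le (a := fun t ↦ ‖w t - x‖ ^ 2)
    (b := fun t ↦ (2 * η t)⁻¹) (B := D ^ 2)
    (fun s t hst ↦ inv_anti₀ (by linarith [hη t]) (by linarith [hanti hst]))
    (inv_nonneg.2 (by linarith [hη 0])) (fun t ↦ sq_nonneg _)
    (fun t ht ↦ pow_le_pow_left₀ (norm_nonneg _) (hdiam _ (hmem t ht) _ hx) 2) T
  calc ∑ t ∈ Icc 1 T, inner ℝ (g t) (w t - x)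
      ≤ ∑ t ∈ Icc 1 T, ((2 * η t)⁻¹ * (‖w t - x‖ ^ 2 - ‖w (t + 1) - x‖ ^ 2)
          + η t / 2 * ‖g t‖ ^ 2) := sum_le_sum hstep
    _ ≤ (2 * η T)⁻¹ * D ^ 2 + ∑ t ∈ Icc 1 T, η t / 2 * ‖g t‖ ^ 2 := by
      rw [sum_add_distrib]; exact add_le_add_left htelescope _

theorem sogd_sum_inner_le {W : Set E} (hW : Convex ℝ W) (proj : E → E)
    (hproj : ∀ x : E, proj x ∈ W ∧ ∀ y ∈ W, ‖x - proj x‖ ≤ ‖x - y‖)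
    {D : ℝ} (hdiam : ∀ x ∈ W, ∀ y ∈ W, ‖x - y‖ ≤ D) {δ : ℝ} (hδ : 0 < δ)
    {g w : ℕ → E} (hw1 : w 1 ∈ W)
    (hwrec : ∀ t ≥ 1, w (t + 1) =
      proj (w t - ((D / √2) / √(δ + ∑ i ∈ Icc 1 t, ‖g i‖ ^ 2)) • g t))
    {x : E} (hx : x ∈ W) (T : ℕ) :
    ∑ t ∈ Icc 1 T, inner ℝ (g t) (w t - x)
      ≤ √(2 * D ^ 2) * √(δ + ∑ t ∈ Icc 1 T, ‖g t‖ ^ 2) := by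
  set S : ℕ → ℝ := fun n ↦ δ + ∑ i ∈ Icc 1 n, ‖g i‖ ^ 2
  have hSpos (n : ℕ) : 0 < S n := by positivity
  rcases (norm_nonneg _ |>.trans (hdiam x hx x hx)).eq_or_lt with hD | hD
  · -- For `D = 0` the stepsizes vanish, but then every iterate is `x`.
    have hmem := mem_of_succ_eq_proj (fun y ↦ (hproj y).1) hw1 hwrec
    have hwx (t : ℕ) (ht : t ∈ Icc 1 T) : w t - x = 0 :=
      norm_le_zero_iff.mp (hD ▸ hdiam _ (hmem t (mem_Icc.mp ht).1) _ hx)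
    rw [sum_eq_zero fun t ht ↦ by rw [hwx t ht, inner_zero_right]]
    positivity
  set α := D / √2 with hα
  have hαpos : 0 < α := by positivity
  have hanti : Antitone fun n ↦ α / √(S n) := fun m n hmn ↦
    div_le_div_of_nonneg_left hαpos.le (Real.sqrt_pos.2 (hSpos m)) <|
      Real.sqrt_le_sqrt (add_le_add_right (sum_le_sum_of_subset_of_nonneg
        (Icc_subset_Icc_right hmn) fun i _ _ ↦ sq_nonneg _) δ)
  have hregret := sum_inner_le_of_projected_gradient_descent hW proj hproj hdiam
    (fun n ↦ div_pos hαpos (Real.sqrt_pos.2 (hSpos n))) hanti hw1 hwrec hx T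
  have hstepsizes : ∑ t ∈ Icc 1 T, α / √(S t) / 2 * ‖g t‖ ^ 2 ≤ α * √(S T) := by
    have hsum : ∑ t ∈ Icc 1 T, ‖g t‖ ^ 2 / √(S t) ≤ 2 * (√(S T) - √δ) :=
      sum_Icc_div_sqrt_partialSum_le (fun t ↦ sq_nonneg _) hδ.le T
    calc ∑ t ∈ Icc 1 T, α / √(S t) / 2 * ‖g t‖ ^ 2
        = α / 2 * ∑ t ∈ Icc 1 T, ‖g t‖ ^ 2 / √(S t) := by
          rw [mul_sum]; exact sum_congr rfl fun _ _ ↦ by ring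
      _ ≤ α / 2 * (2 * (√(S T) - √δ)) := by gcongr
      _ ≤ α * √(S T) := by nlinarith [Real.sqrt_nonneg δ]
  have hconst : (2 * (α / √(S T)))⁻¹ * D ^ 2 + α * √(S T) = √(2 * D ^ 2) * √(S T) := by
    have hsqrt2 : √2 ^ 2 = 2 := Real.sq_sqrt zero_le_two
    rw [Real.sqrt_mul zero_le_two, Real.sqrt_sq hD.le, hα]
    field_simp
    rw [hsqrt2]; ring
  linarith

end InnerProductSpace

theorem stmt_15_general
    {E : Type*} [NormedAddCommGroup E] [InnerProductSpace ℝ E] [FiniteDimensional ℝ E]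
    (W : Set E) (hWconvex : Convex ℝ W)
    -- `proj` is the metric projection onto `W`
    (proj : E → E)
    (hproj : ∀ x : E, proj x ∈ W ∧ ∀ y ∈ W, ‖x - proj x‖ ≤ ‖x - y‖)
    (D : ℝ) (hdiam : ∀ x ∈ W, ∀ y ∈ W, ‖x - y‖ ≤ D)
    (T : ℕ) (f : ℕ → E → ℝ)
    (hconv : ∀ t ∈ Finset.Icc 1 T, ConvexOn ℝ Set.univ (f t))
    (hdiff : ∀ t ∈ Finset.Icc 1 T, Differentiable ℝ (f t))
    (δ : ℝ) (hδ : 0 < δ)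
    (w : ℕ → E) (hw1 : w 1 ∈ W)
    (hwrec : ∀ t ≥ 1, w (t + 1) =
      proj (w t - ((D / Real.sqrt 2) /
        Real.sqrt (δ + ∑ i ∈ Finset.Icc 1 t, ‖gradient (f i) (w i)‖ ^ 2)) •
          gradient (f t) (w t)))
    (x : E) (hx : x ∈ W) :
    ∑ t ∈ Finset.Icc 1 T, f t (w t) - ∑ t ∈ Finset.Icc 1 T, f t x
      ≤ Real.sqrt (2 * D ^ 2)
        * Real.sqrt (δ + ∑ t ∈ Finset.Icc 1 T, ‖gradient (f t) (w t)‖ ^ 2) := by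
  calc ∑ t ∈ Icc 1 T, f t (w t) - ∑ t ∈ Icc 1 T, f t x
      = ∑ t ∈ Icc 1 T, (f t (w t) - f t x) := (sum_sub_distrib _ _).symm
    _ ≤ ∑ t ∈ Icc 1 T, inner ℝ (gradient (f t) (w t)) (w t - x) :=
      sum_le_sum fun t ht ↦ (hconv t ht).sub_le_inner_gradient (Set.mem_univ _)
        (Set.mem_univ _) (hdiff t ht _)
    _ ≤ _ := sogd_sum_inner_le hWconvex proj hproj hdiam hδ hw1 hwrec hx T

/-- Scale-free bound for SOGD (following Orabona and Pál): with parameters `δ > 0` and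
`α = D/√2`, for convex differentiable losses over a nonempty closed convex domain `W` of
diameter at most `D` (no smoothness or nonnegativity assumed), SOGD satisfies, for every
`x ∈ W`, `Σ_{t=1}^T f t (w t) − Σ_{t=1}^T f t x ≤ √(2D²)·√(δ + Σ_{t=1}^T ‖∇ f t (w t)‖²)`. -/
theorem stmt_15
    {E : Type*} [NormedAddCommGroup E] [InnerProductSpace ℝ E] [FiniteDimensional ℝ E]
    (W : Set E) (hWne : W.Nonempty) (hWclosed : IsClosed W) (hWconvex : Convex ℝ W)
    -- `proj` is the metric projection onto `W`
    (proj : E → E)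
    (hproj : ∀ x : E, proj x ∈ W ∧ ∀ y ∈ W, ‖x - proj x‖ ≤ ‖x - y‖)
    (D : ℝ) (hdiam : ∀ x ∈ W, ∀ y ∈ W, ‖x - y‖ ≤ D)
    (T : ℕ) (f : ℕ → E → ℝ)
    (hconv : ∀ t ∈ Finset.Icc 1 T, ConvexOn ℝ Set.univ (f t))
    (hdiff : ∀ t ∈ Finset.Icc 1 T, Differentiable ℝ (f t))
    (δ : ℝ) (hδ : 0 < δ)
    (w : ℕ → E) (hw1 : w 1 ∈ W)
    (hwrec : ∀ t ≥ 1, w (t + 1) =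
      proj (w t - ((D / Real.sqrt 2) /
        Real.sqrt (δ + ∑ i ∈ Finset.Icc 1 t, ‖gradient (f i) (w i)‖ ^ 2)) •
          gradient (f t) (w t)))
    (x : E) (hx : x ∈ W) :
    ∑ t ∈ Finset.Icc 1 T, f t (w t) - ∑ t ∈ Finset.Icc 1 T, f t x
      ≤ Real.sqrt (2 * D ^ 2)
        * Real.sqrt (δ + ∑ t ∈ Finset.Icc 1 T, ‖gradient (f t) (w t)‖ ^ 2) :=
  stmt_15_general W hWconvex proj hproj D hdiam T f hconv hdiff δ hδ w hw1 hwrec x hx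
end

section
/- Under Assumptions 1–3, suppose the SOGD iterates w_a, …, w_b (SOGD with parameters δ > 0, α = D/√2 started at round a) satisfy Σ_{u=a}^b f_u(w_u) ≥ C, where C ≥ 20 H D² + 2D√(2δ). Then every comparator w ∈ W satisfies Σ_{u=a}^b f_u(w) ≥ C/4. -/
/-!
Convexity bounds the loss gap `L - R` between the iterates and a comparator `x` by the linearised
regret `∑ ⟪∇f_t(w_t), w_t - x⟫`, and the usual projected-gradient telescoping with the adaptive
steps `α / √S_t`, `S_t = δ + ∑_{u ≤ t} ‖∇f_u(w_u)‖²`, bounds that by `√2 D √S_b`.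
Nonnegativity and `H`-smoothness give the self-bounding inequality `‖∇f(y)‖² ≤ 2 H f(y)`, hence
`S_b ≤ δ + 2 H L` and `(L - R)² ≤ 2 D² δ + 4 H D² L ≤ C² / 4 + C L / 5 ≤ (L - C / 4)²` as `C ≤ L`.
-/

open Finset
open scoped RealInnerProductSpace

section Gradient

variable {E : Type*} [NormedAddCommGroup E] [InnerProductSpace ℝ E] [CompleteSpace E]
  {f : E → ℝ}

lemma Differentiable.hasDerivAt_comp_add_smul (hf : Differentiable ℝ f) (x v : E) (t : ℝ) :
    HasDerivAt (fun s : ℝ => f (x + s • v)) ⟪gradient f (x + t • v), v⟫ t := by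
  have hline : HasDerivAt (fun s : ℝ => x + s • v) v t := by
    simpa using ((hasDerivAt_id t).smul_const v).const_add x
  simpa [Function.comp_def] using
    (hf (x + t • v)).hasGradientAt.hasFDerivAt.comp_hasDerivAt t hline

lemma ConvexOn.sub_le_inner_gradient_s18 (hconv : ConvexOn ℝ Set.univ f) (hf : Differentiable ℝ f)
    (x y : E) : f x - f y ≤ ⟪gradient f x, x - y⟫ := by
  have hline : ConvexOn ℝ Set.univ (fun s : ℝ => f (x + s • (y - x))) := by
    have h := hconv.comp_affineMap (AffineMap.lineMap x y)
    have heq : ⇑(AffineMap.lineMap x y : ℝ →ᵃ[ℝ] E) = fun s : ℝ => x + s • (y - x) := by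
      ext s
      rw [AffineMap.lineMap_apply_module]
      module
    simpa [heq, Function.comp_def] using h
  have hderiv := hf.hasDerivAt_comp_add_smul x (y - x) 0
  rw [zero_smul, add_zero] at hderiv
  have hslope :=
    hline.le_slope_of_hasDerivAt (Set.mem_univ 0) (Set.mem_univ 1) zero_lt_one hderiv
  simp only [slope_def_field, one_smul, zero_smul, add_zero, sub_zero, div_one,
    add_sub_cancel] at hslope
  rw [show x - y = -(y - x) by abel, inner_neg_right]
  linarith

lemma le_add_inner_gradient_add_of_lipschitz_gradient (hf : Differentiable ℝ f) {H : ℝ}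
    (hsm : ∀ p q : E, ‖gradient f p - gradient f q‖ ≤ H * ‖p - q‖) (x v : E) :
    f (x + v) ≤ f x + ⟪gradient f x, v⟫ + H / 2 * ‖v‖ ^ 2 := by
  set c := ⟪gradient f x, v⟫
  let φ : ℝ → ℝ := fun t => f (x + t • v) - t * c - H / 2 * ‖v‖ ^ 2 * t ^ 2
  have hφ : ∀ t,
      HasDerivAt φ (⟪gradient f (x + t • v) - gradient f x, v⟫ - H * ‖v‖ ^ 2 * t) t := by
    intro t
    refine (((hf.hasDerivAt_comp_add_smul x v t).sub ((hasDerivAt_id' t).mul_const c)).sub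
      ((hasDerivAt_pow 2 t).const_mul (H / 2 * ‖v‖ ^ 2))).congr_deriv ?_
    simp only [inner_sub_left, c]
    ring
  have hanti : AntitoneOn φ (Set.Icc 0 1) := by
    refine antitoneOn_of_hasDerivWithinAt_nonpos (convex_Icc 0 1)
      (fun t _ => (hφ t).continuousAt.continuousWithinAt) (fun t _ => (hφ t).hasDerivWithinAt) ?_
    intro t ht
    rw [interior_Icc] at ht
    have hinner : ⟪gradient f (x + t • v) - gradient f x, v⟫ ≤ H * ‖v‖ ^ 2 * t :=
      calc _ ≤ ‖gradient f (x + t • v) - gradient f x‖ * ‖v‖ := real_inner_le_norm _ _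
        _ ≤ H * ‖(x + t • v) - x‖ * ‖v‖ := by gcongr; exact hsm _ _
        _ = H * ‖v‖ ^ 2 * t := by
          rw [add_sub_cancel_left, norm_smul, Real.norm_of_nonneg ht.1.le]
          ring
    linarith
  have h01 := hanti (Set.left_mem_Icc.2 zero_le_one) (Set.right_mem_Icc.2 zero_le_one) zero_le_one
  simp only [φ, one_smul, zero_smul, add_zero] at h01
  linarith

/-- By the descent lemma and `0 ≤ f`, `s ↦ f x - s ‖∇f x‖² + H s² ‖∇f x‖² / 2` is a nonnegative
quadratic, so its discriminant is nonpositive. -/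
lemma sq_norm_gradient_le_of_nonneg (hf : Differentiable ℝ f) (hnn : ∀ x, 0 ≤ f x) {H : ℝ}
    (hH : 0 ≤ H) (hsm : ∀ p q : E, ‖gradient f p - gradient f q‖ ≤ H * ‖p - q‖) (x : E) :
    ‖gradient f x‖ ^ 2 ≤ 2 * H * f x := by
  set g := gradient f x
  have hquad : ∀ s : ℝ, 0 ≤ H / 2 * ‖g‖ ^ 2 * (s * s) + -‖g‖ ^ 2 * s + f x := by
    intro s
    have h := le_add_inner_gradient_add_of_lipschitz_gradient hf hsm x (-(s • g))
    rw [inner_neg_right, real_inner_smul_right, real_inner_self_eq_norm_sq, norm_neg, norm_smul,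
      Real.norm_eq_abs, mul_pow, sq_abs] at h
    nlinarith [hnn (x + -(s • g))]
  have hdisc := discrim_le_zero hquad
  rw [discrim] at hdisc
  rcases (sq_nonneg ‖g‖).eq_or_lt with h0 | hpos
  · rw [← h0]
    exact mul_nonneg (by positivity) (hnn x)
  · nlinarith

end Gradient

lemma sub_div_sqrt_le_two_mul_sub_sqrt {p q : ℝ} (hp : 0 < p) (hpq : p ≤ q) :
    (q - p) / √q ≤ 2 * (√q - √p) := by
  have hq : 0 < √q := Real.sqrt_pos.2 (hp.trans_le hpq)
  rw [div_le_iff₀ hq]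
  nlinarith [Real.sq_sqrt hp.le, Real.sq_sqrt (hp.le.trans hpq), sq_nonneg (√q - √p),
    Real.sqrt_nonneg p]

lemma sum_div_sqrt_add_partial_sum_le {c : ℕ → ℝ} (hc : ∀ t, 0 ≤ c t) {δ : ℝ} (hδ : 0 < δ)
    {a : ℕ} : ∀ n ≥ a, ∑ t ∈ Icc a n, c t / √(δ + ∑ u ∈ Icc a t, c u)
      ≤ 2 * (√(δ + ∑ u ∈ Icc a n, c u) - √δ) := by
  intro n hn
  induction n, hn using Nat.le_induction with
  | base =>
    simp only [Icc_self, sum_singleton]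
    simpa using sub_div_sqrt_le_two_mul_sub_sqrt hδ (le_add_of_nonneg_right (hc a))
  | succ n hn ih =>
    have hS : 0 < δ + ∑ u ∈ Icc a n, c u :=
      add_pos_of_pos_of_nonneg hδ (sum_nonneg fun u _ => hc u)
    rw [sum_Icc_succ_top (by omega), sum_Icc_succ_top (by omega)]
    have := sub_div_sqrt_le_two_mul_sub_sqrt hS (le_add_of_nonneg_right (hc (n + 1)))
    rw [add_sub_cancel_left] at this
    rw [← add_assoc]
    linarith

section ProjectedGradient

variable {E : Type*} [NormedAddCommGroup E] {W : Set E} {proj : E → E}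

lemma iterate_mem_of_proj (hproj : ∀ z : E, proj z ∈ W ∧ ∀ y ∈ W, ‖z - proj z‖ ≤ ‖z - y‖)
    {w v : ℕ → E} {a : ℕ} (hwa : w a ∈ W) (hwrec : ∀ t ≥ a, w (t + 1) = proj (v t)) :
    ∀ t ≥ a, w t ∈ W := by
  intro t ht
  induction t, ht using Nat.le_induction with
  | base => exact hwa
  | succ n hn _ => exact hwrec n hn ▸ (hproj _).1

variable [InnerProductSpace ℝ E]

lemma sq_norm_proj_sub_le (hW : Convex ℝ W)
    (hproj : ∀ z : E, proj z ∈ W ∧ ∀ y ∈ W, ‖z - proj z‖ ≤ ‖z - y‖) (z : E) {x : E}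
    (hx : x ∈ W) : ‖proj z - x‖ ^ 2 ≤ ‖z - x‖ ^ 2 := by
  obtain ⟨hpW, hpmin⟩ := hproj z
  have : Nonempty W := ⟨⟨x, hx⟩⟩
  have hinf : ‖z - proj z‖ = ⨅ y : W, ‖z - y‖ :=
    (show IsLeast (Set.range fun y : W => ‖z - y‖) ‖z - proj z‖ from
      ⟨⟨⟨proj z, hpW⟩, rfl⟩, by rintro _ ⟨y, rfl⟩; exact hpmin y y.2⟩).isGLB.ciInf_eq.symm
  have hobtuse := (norm_eq_iInf_iff_real_inner_le_zero hW hpW).1 hinf x hx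
  have hsplit : ‖z - x‖ ^ 2
      = ‖z - proj z‖ ^ 2 - 2 * ⟪z - proj z, x - proj z⟫ + ‖proj z - x‖ ^ 2 := by
    rw [show z - x = (z - proj z) - (x - proj z) by abel, norm_sub_sq_real,
      ← norm_neg (x - proj z), neg_sub]
  nlinarith [sq_nonneg ‖z - proj z‖]

lemma inner_le_of_proj_step (hW : Convex ℝ W)
    (hproj : ∀ z : E, proj z ∈ W ∧ ∀ y ∈ W, ‖z - proj z‖ ≤ ‖z - y‖)
    {η : ℝ} (hη : 0 < η) (g w : E) {x : E} (hx : x ∈ W) :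
    ⟪g, w - x⟫ ≤ (‖w - x‖ ^ 2 - ‖proj (w - η • g) - x‖ ^ 2) * (1 / (2 * η))
      + η / 2 * ‖g‖ ^ 2 := by
  have hstep := sq_norm_proj_sub_le hW hproj (w - η • g) hx
  have hexpand : ‖w - η • g - x‖ ^ 2 = ‖w - x‖ ^ 2 - 2 * η * ⟪g, w - x⟫ + η ^ 2 * ‖g‖ ^ 2 := by
    rw [show w - η • g - x = (w - x) - η • g by abel, norm_sub_sq_real, real_inner_smul_right,
      norm_smul, Real.norm_of_nonneg hη.le, real_inner_comm]
    ring
  rw [hexpand] at hstep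
  rw [mul_one_div, ← sub_le_iff_le_add, le_div_iff₀ (by positivity)]
  nlinarith

lemma sum_Icc_sub_succ_mul_le {A ρ : ℕ → ℝ} {M : ℝ} {a : ℕ} (hA : ∀ t ≥ a, A t ≤ M)
    (hρ : Monotone ρ) (hρ0 : ∀ t, 0 ≤ ρ t) :
    ∀ n ≥ a, ∑ t ∈ Icc a n, (A t - A (t + 1)) * ρ t ≤ (M - A (n + 1)) * ρ n := by
  intro n hn
  induction n, hn using Nat.le_induction with
  | base =>
    rw [Icc_self, sum_singleton]
    nlinarith [hA a le_rfl, hρ0 a]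
  | succ n hn ih =>
    rw [sum_Icc_succ_top (by omega)]
    nlinarith [mul_le_mul_of_nonneg_left (hρ n.le_succ) (sub_nonneg.2 (hA (n + 1) (by omega)))]

lemma sum_inner_le_of_proj_gradient (hW : Convex ℝ W)
    (hproj : ∀ z : E, proj z ∈ W ∧ ∀ y ∈ W, ‖z - proj z‖ ≤ ‖z - y‖)
    {D : ℝ} (hdiam : ∀ x ∈ W, ∀ y ∈ W, ‖x - y‖ ≤ D) {η : ℕ → ℝ} (hη : ∀ t, 0 < η t)
    (hη_anti : Antitone η) {g w : ℕ → E} {a b : ℕ} (hab : a ≤ b) (hwa : w a ∈ W)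
    (hwrec : ∀ t ≥ a, w (t + 1) = proj (w t - η t • g t)) {x : E} (hx : x ∈ W) :
    ∑ t ∈ Icc a b, ⟪g t, w t - x⟫
      ≤ D ^ 2 * (1 / (2 * η b)) + ∑ t ∈ Icc a b, η t / 2 * ‖g t‖ ^ 2 := by
  have hwW := iterate_mem_of_proj hproj hwa hwrec
  have hdist : ∀ t ≥ a, ‖w t - x‖ ^ 2 ≤ D ^ 2 := fun t ht =>
    pow_le_pow_left₀ (norm_nonneg _) (hdiam _ (hwW t ht) x hx) 2
  have hρ : Monotone fun t => 1 / (2 * η t) := fun s t hst =>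
    one_div_le_one_div_of_le (by linarith [hη t]) (by linarith [hη_anti hst])
  calc ∑ t ∈ Icc a b, ⟪g t, w t - x⟫
      ≤ ∑ t ∈ Icc a b, ((‖w t - x‖ ^ 2 - ‖w (t + 1) - x‖ ^ 2) * (1 / (2 * η t))
          + η t / 2 * ‖g t‖ ^ 2) := by
        refine sum_le_sum fun t ht => ?_
        rw [hwrec t (mem_Icc.1 ht).1]
        exact inner_le_of_proj_step hW hproj (hη t) (g t) (w t) hx
    _ = ∑ t ∈ Icc a b, (‖w t - x‖ ^ 2 - ‖w (t + 1) - x‖ ^ 2) * (1 / (2 * η t))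
          + ∑ t ∈ Icc a b, η t / 2 * ‖g t‖ ^ 2 := sum_add_distrib
    _ ≤ D ^ 2 * (1 / (2 * η b)) + ∑ t ∈ Icc a b, η t / 2 * ‖g t‖ ^ 2 := by
        gcongr
        refine (sum_Icc_sub_succ_mul_le hdist hρ (fun t => ?_) b hab).trans ?_
        · have := hη t
          positivity
        · have := hη b
          have := sq_nonneg ‖w (b + 1) - x‖
          gcongr
          linarith

lemma sum_inner_le_of_adaptive_proj_gradient (hW : Convex ℝ W)
    (hproj : ∀ z : E, proj z ∈ W ∧ ∀ y ∈ W, ‖z - proj z‖ ≤ ‖z - y‖)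
    {D : ℝ} (hdiam : ∀ x ∈ W, ∀ y ∈ W, ‖x - y‖ ≤ D) {α δ : ℝ} (hα : 0 < α) (hδ : 0 < δ)
    {g w : ℕ → E} {a b : ℕ} (hab : a ≤ b) (hwa : w a ∈ W)
    (hwrec : ∀ t ≥ a, w (t + 1) =
      proj (w t - (α / √(δ + ∑ u ∈ Icc a t, ‖g u‖ ^ 2)) • g t))
    {x : E} (hx : x ∈ W) :
    ∑ t ∈ Icc a b, ⟪g t, w t - x⟫
      ≤ (D ^ 2 / (2 * α) + α) * √(δ + ∑ u ∈ Icc a b, ‖g u‖ ^ 2) := by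
  set S : ℕ → ℝ := fun t => δ + ∑ u ∈ Icc a t, ‖g u‖ ^ 2
  have hS_pos : ∀ t, 0 < √(S t) := fun t =>
    Real.sqrt_pos.2 (add_pos_of_pos_of_nonneg hδ (sum_nonneg fun u _ => sq_nonneg _))
  have hS_mono : Monotone S := fun s t hst =>
    add_le_add_right (sum_le_sum_of_subset_of_nonneg (Icc_subset_Icc_right hst)
      fun _ _ _ => sq_nonneg _) δ
  have hη_anti : Antitone fun t => α / √(S t) := fun s t hst =>
    div_le_div_of_nonneg_left hα.le (hS_pos s) (Real.sqrt_le_sqrt (hS_mono hst))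
  have hgrad := sum_div_sqrt_add_partial_sum_le (c := fun u => ‖g u‖ ^ 2)
    (fun _ => sq_nonneg _) hδ b hab
  calc ∑ t ∈ Icc a b, ⟪g t, w t - x⟫
      ≤ D ^ 2 * (1 / (2 * (α / √(S b)))) + ∑ t ∈ Icc a b, α / √(S t) / 2 * ‖g t‖ ^ 2 :=
        sum_inner_le_of_proj_gradient hW hproj hdiam (fun t => div_pos hα (hS_pos t)) hη_anti
          hab hwa hwrec hx
    _ = D ^ 2 / (2 * α) * √(S b) + α / 2 * ∑ t ∈ Icc a b, ‖g t‖ ^ 2 / √(S t) := by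
        rw [mul_sum]
        congr 1
        · field_simp
        · refine sum_congr rfl fun t _ => ?_
          field_simp
    _ ≤ D ^ 2 / (2 * α) * √(S b) + α / 2 * (2 * (√(S b) - √δ)) := by gcongr
    _ ≤ (D ^ 2 / (2 * α) + α) * √(S b) := by nlinarith [Real.sqrt_nonneg δ]

end ProjectedGradient

lemma div_four_le_of_sub_le_sqrt_two_mul_sqrt {H D δ C L R : ℝ} (hH : 0 ≤ H) (hD : 0 ≤ D)
    (hδ : 0 ≤ δ) (hC : 20 * H * D ^ 2 + 2 * D * √(2 * δ) ≤ C) (hL : C ≤ L)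
    (hreg : L - R ≤ √2 * D * √(δ + 2 * H * L)) : C / 4 ≤ R := by
  have hq : 0 ≤ D * √(2 * δ) := by positivity
  have hHD : 0 ≤ H * D ^ 2 := by positivity
  have hL₀ : 0 ≤ L := by linarith
  have hX : (√2 * D * √(δ + 2 * H * L)) ^ 2 = 2 * D ^ 2 * δ + 4 * (H * D ^ 2) * L := by
    rw [mul_pow, mul_pow, Real.sq_sqrt zero_le_two, Real.sq_sqrt (by positivity)]
    ring
  have hδC : 2 * D ^ 2 * δ ≤ C ^ 2 / 4 := by
    have hsq : (D * √(2 * δ)) ^ 2 = 2 * D ^ 2 * δ := by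
      rw [mul_pow, Real.sq_sqrt (by positivity)]
      ring
    nlinarith
  have hHL : 4 * (H * D ^ 2) * L ≤ C * L / 5 := by nlinarith
  by_contra! hR
  have hgap : L - C / 4 ≤ √2 * D * √(δ + 2 * H * L) := by linarith
  nlinarith [mul_self_le_mul_self (by linarith) hgap]

theorem stmt_18_general
    {E : Type*} [NormedAddCommGroup E] [InnerProductSpace ℝ E] [FiniteDimensional ℝ E]
    (W : Set E) (hWconvex : Convex ℝ W)
    -- `proj` is the metric projection onto `W`
    (proj : E → E)
    (hproj : ∀ x : E, proj x ∈ W ∧ ∀ y ∈ W, ‖x - proj x‖ ≤ ‖x - y‖)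
    -- Assumption 1: the diameter of `W` is bounded by `D`
    (D : ℝ) (hdiam : ∀ x ∈ W, ∀ y ∈ W, ‖x - y‖ ≤ D)
    -- Assumption 2: the online functions are convex, differentiable and nonnegative on `E`
    (f : ℕ → E → ℝ)
    (hconv : ∀ t, ConvexOn ℝ Set.univ (f t))
    (hdiff : ∀ t, Differentiable ℝ (f t))
    (hnonneg : ∀ t, ∀ x : E, 0 ≤ f t x)
    -- Assumption 3: the online functions are `H`-smooth
    (H : ℝ) (hH : 0 ≤ H)
    (hsmooth : ∀ t, ∀ x y : E,
      ‖gradient (f t) x - gradient (f t) y‖ ≤ H * ‖x - y‖)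
    -- SOGD with parameters `δ > 0` and `α = D/√2`, started at round `a`
    (δ : ℝ) (hδ : 0 < δ)
    (a b : ℕ) (hab : a ≤ b)
    (w : ℕ → E) (hwa : w a ∈ W)
    (hwrec : ∀ t ≥ a, w (t + 1) =
      proj (w t - ((D / Real.sqrt 2) /
        Real.sqrt (δ + ∑ u ∈ Finset.Icc a t, ‖gradient (f u) (w u)‖ ^ 2)) •
          gradient (f t) (w t)))
    (C : ℝ) (hC : 20 * H * D ^ 2 + 2 * D * Real.sqrt (2 * δ) ≤ C)
    (hloss : C ≤ ∑ u ∈ Finset.Icc a b, f u (w u)) :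
    ∀ x ∈ W, C / 4 ≤ ∑ u ∈ Finset.Icc a b, f u x := by
  intro x hx
  have hD : 0 ≤ D := (norm_nonneg _).trans (hdiam x hx x hx)
  set g : ℕ → E := fun u => gradient (f u) (w u)
  set L := ∑ u ∈ Icc a b, f u (w u)
  have hlin : L - ∑ u ∈ Icc a b, f u x ≤ ∑ u ∈ Icc a b, ⟪g u, w u - x⟫ := by
    rw [← sum_sub_distrib]
    exact sum_le_sum fun u _ => (hconv u).sub_le_inner_gradient_s18 (hdiff u) (w u) x
  have hself : ∑ u ∈ Icc a b, ‖g u‖ ^ 2 ≤ 2 * H * L := by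
    rw [mul_sum]
    exact sum_le_sum fun u _ =>
      sq_norm_gradient_le_of_nonneg (hdiff u) (hnonneg u) hH (hsmooth u) (w u)
  have hregret : ∑ u ∈ Icc a b, ⟪g u, w u - x⟫ ≤ √2 * D * √(δ + 2 * H * L) := by
    rcases hD.eq_or_lt with rfl | hD
    -- for `D = 0` the step size vanishes, but `W` is the single point `x`
    · have hwW := iterate_mem_of_proj hproj hwa hwrec
      refine (sum_eq_zero fun u hu => ?_).trans_le (by simp)
      have := hdiam _ (hwW u (mem_Icc.1 hu).1) x hx
      rw [norm_le_zero_iff.1 this, inner_zero_right]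
    calc ∑ u ∈ Icc a b, ⟪g u, w u - x⟫
        ≤ (D ^ 2 / (2 * (D / √2)) + D / √2) * √(δ + ∑ u ∈ Icc a b, ‖g u‖ ^ 2) :=
          sum_inner_le_of_adaptive_proj_gradient hWconvex hproj hdiam (by positivity) hδ hab
            hwa hwrec hx
      _ = √2 * D * √(δ + ∑ u ∈ Icc a b, ‖g u‖ ^ 2) := by
          congr 1
          field_simp
          rw [Real.sq_sqrt zero_le_two]
          ring
      _ ≤ √2 * D * √(δ + 2 * H * L) := by gcongr
  exact div_four_le_of_sub_le_sqrt_two_mul_sqrt hH hD hδ.le hC hloss (hlin.trans hregret)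

/-- If the SOGD iterates (parameters `δ > 0`, `α = D/√2`) started at round `a` accumulate
loss at least `C` over the rounds `a, …, b`, where `C ≥ 20 H D² + 2D√(2δ)`, then every
comparator `x ∈ W` accumulates loss at least `C/4` over the same rounds. -/
theorem stmt_18
    {E : Type*} [NormedAddCommGroup E] [InnerProductSpace ℝ E] [FiniteDimensional ℝ E]
    (W : Set E) (hWne : W.Nonempty) (hWclosed : IsClosed W) (hWconvex : Convex ℝ W)
    -- `proj` is the metric projection onto `W`
    (proj : E → E)
    (hproj : ∀ x : E, proj x ∈ W ∧ ∀ y ∈ W, ‖x - proj x‖ ≤ ‖x - y‖)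
    -- Assumption 1: the diameter of `W` is bounded by `D`
    (D : ℝ) (hdiam : ∀ x ∈ W, ∀ y ∈ W, ‖x - y‖ ≤ D)
    -- Assumption 2: the online functions are convex, differentiable and nonnegative on `E`
    (f : ℕ → E → ℝ)
    (hconv : ∀ t, ConvexOn ℝ Set.univ (f t))
    (hdiff : ∀ t, Differentiable ℝ (f t))
    (hnonneg : ∀ t, ∀ x : E, 0 ≤ f t x)
    -- Assumption 3: the online functions are `H`-smooth
    (H : ℝ) (hH : 0 ≤ H)
    (hsmooth : ∀ t, ∀ x y : E,
      ‖gradient (f t) x - gradient (f t) y‖ ≤ H * ‖x - y‖)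
    -- SOGD with parameters `δ > 0` and `α = D/√2`, started at round `a`
    (δ : ℝ) (hδ : 0 < δ)
    (a b : ℕ) (ha : 1 ≤ a) (hab : a ≤ b)
    (w : ℕ → E) (hwa : w a ∈ W)
    (hwrec : ∀ t ≥ a, w (t + 1) =
      proj (w t - ((D / Real.sqrt 2) /
        Real.sqrt (δ + ∑ u ∈ Finset.Icc a t, ‖gradient (f u) (w u)‖ ^ 2)) •
          gradient (f t) (w t)))
    (C : ℝ) (hC : 20 * H * D ^ 2 + 2 * D * Real.sqrt (2 * δ) ≤ C)
    (hloss : C ≤ ∑ u ∈ Finset.Icc a b, f u (w u)) :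
    ∀ x ∈ W, C / 4 ≤ ∑ u ∈ Finset.Icc a b, f u x :=
  stmt_18_general W hWconvex proj hproj D hdiam f hconv hdiff hnonneg H hH hsmooth δ hδ a b hab w
    hwa hwrec C hC hloss
end
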